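/- Let B₁⁺ := B₁ ∩ {ζ>0} ⊂ ℝ², with coordinates (ζ,y). Let H̃ be a function on the closure of B₁⁺ which vanishes continuously on {ζ=0}. If H̃ ∈ C^{k,α}(closure of B₁⁺) for k ≥ 1 an integer and α ∈ (0,1], then the function (ζ,y) ↦ ζ⁻¹H̃(ζ,y) belongs to C^{k−1,α}(closure of B₁⁺), and ‖ζ⁻¹H̃‖_{C^{k−1,α}} ≤ ‖H̃‖_{C^{k,α}}. -/

import Mathlib

/-!
Write `squeeze t (ζ, y) = (tζ, y)`. Since `H̃` vanishes on `{ζ = 0}`, the fundamental theorem of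
calculus along the segment `t ↦ squeeze t z` gives `ζ⁻¹H̃(z) = ∫₀¹ ∂_ζH̃(squeeze t z) dt` on the
closed half-disk. Differentiating under the integral sign, the `i`-th derivative of `ζ⁻¹H̃` at `z`
is the average over `t` of the `i`-th derivative of `∂_ζH̃` at `squeeze t z`, precomposed with the
contraction `squeeze t`. Hence each sup norm and the Hölder seminorm of `ζ⁻¹H̃` are bounded by
those of `∂_ζH̃`, and these by the corresponding ones of `H̃` one order higher.
-/

open Metric Set Topology

noncomputable section

namespace ThinLemma

/-- The closed upper half-disk `B₁⁺ = closure (B₁ ∩ {ζ > 0}) ⊂ ℝ²`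
(coordinates `(ζ, y)`; `ζ` is coordinate `0`). -/
def D : Set (EuclideanSpace ℝ (Fin 2)) :=
  closure (ball (0 : EuclideanSpace ℝ (Fin 2)) 1 ∩ {z | 0 < z 0})

/-- Membership in `C^{j,α}(D)` with all `C^{j,α}`-norm terms bounded by `K`:
the derivatives up to order `j` exist on `D`, are bounded by `K`,
and the order-`j` derivatives are `α`-Hölder with constant `K`. -/
def MemHolder (K : ℝ) (j : ℕ) (α : ℝ) (f : EuclideanSpace ℝ (Fin 2) → ℝ) : Prop :=
  ContDiffOn ℝ j f D ∧
  (∀ i ≤ j, ∀ z ∈ D, ‖iteratedFDerivWithin ℝ i f D z‖ ≤ K) ∧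
  (∀ z ∈ D, ∀ w ∈ D,
    ‖iteratedFDerivWithin ℝ j f D z - iteratedFDerivWithin ℝ j f D w‖ ≤ K * ‖z - w‖ ^ α)

/-- The function `ζ⁻¹ H̃`, extended to `{ζ = 0}` by its limiting values
(the `ζ`-derivative of `H̃`). -/
def divZeta (H : EuclideanSpace ℝ (Fin 2) → ℝ) (z : EuclideanSpace ℝ (Fin 2)) : ℝ :=
  if z 0 = 0 then fderivWithin ℝ H D z (EuclideanSpace.single 0 1) else H z / z 0

end ThinLemma

theorem continuousOn_slice {X Y Z : Type*} [TopologicalSpace X] [TopologicalSpace Y]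
    [TopologicalSpace Z] {F : X × Y → Z} {s : Set X} {t : Set Y} (hF : ContinuousOn F (s ×ˢ t))
    {x : X} (hx : x ∈ s) : ContinuousOn (fun y => F (x, y)) t :=
  hF.comp (continuousOn_const.prodMk continuousOn_id) fun _ hy => ⟨hx, hy⟩

section ParametricIntegral

variable {E G : Type*} [NormedAddCommGroup E] [NormedSpace ℝ E]
  [NormedAddCommGroup G] [NormedSpace ℝ G]

theorem norm_intervalIntegral_unit_le {f : ℝ → G} {C : ℝ} (h : ∀ t ∈ Icc (0:ℝ) 1, ‖f t‖ ≤ C) :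
    ‖∫ t in (0:ℝ)..1, f t‖ ≤ C := by
  simpa using intervalIntegral.norm_integral_le_of_norm_le_const (a := 0) (b := 1)
    fun t ht => h t (Ioc_subset_Icc_self (by simpa using ht))

theorem continuousOn_intervalIntegral_of_continuousOn_prod {X : Type*} [TopologicalSpace X]
    {s : Set X} {F : X × ℝ → G} (hF : ContinuousOn F (s ×ˢ Icc 0 1)) :
    ContinuousOn (fun x => ∫ t in (0:ℝ)..1, F (x, t)) s := by
  -- clamping the parameter to `[0, 1]` makes the integrand continuous on all of `s × ℝ`
  let Ψ : s → ℝ → G := fun x t => F (x, projIcc 0 1 zero_le_one t)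
  have hΨ : Continuous (Function.uncurry Ψ) :=
    hF.comp_continuous (f := fun q : s × ℝ => ((q.1 : X), (projIcc 0 1 zero_le_one q.2 : ℝ)))
      (by fun_prop) fun q => ⟨q.1.2, (projIcc 0 1 zero_le_one q.2).2⟩
  rw [continuousOn_iff_continuous_domRestrict]
  refine (intervalIntegral.continuous_parametric_intervalIntegral_of_continuous' hΨ 0 1).congr
    fun x => intervalIntegral.integral_congr fun t ht => ?_
  rw [uIcc_of_le zero_le_one] at ht
  simp [Ψ, projIcc_of_mem zero_le_one ht]

theorem hasFDerivWithinAt_intervalIntegral_of_tendstoUniformlyOn {s : Set E} (hs : Convex ℝ s)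
    {x : E} (hx : x ∈ s) {Φ : ℝ → E → G} {Φ' : ℝ → E → E →L[ℝ] G}
    (hΦ : ∀ t ∈ Icc (0:ℝ) 1, ∀ y ∈ s, HasFDerivWithinAt (Φ t) (Φ' t y) s y)
    (hΦ' : TendstoUniformlyOn (fun y t => Φ' t y) (fun t => Φ' t x) (𝓝[s] x) (Icc 0 1))
    (hint : ∀ y ∈ s, IntervalIntegrable (fun t => Φ t y) MeasureTheory.volume 0 1)
    (hint' : IntervalIntegrable (fun t => Φ' t x) MeasureTheory.volume 0 1) :
    HasFDerivWithinAt (fun y => ∫ t in (0:ℝ)..1, Φ t y) (∫ t in (0:ℝ)..1, Φ' t x) s x := by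
  rw [hasFDerivWithinAt_iff_isLittleO, Asymptotics.isLittleO_iff]
  intro ε hε
  obtain ⟨δ, hδ, hball⟩ := mem_nhdsWithin_iff.1
    (tendstoUniformlyOn_iff.1 hΦ' ε hε)
  filter_upwards [inter_mem_nhdsWithin s (ball_mem_nhds x hδ)] with y ⟨hys, hy⟩
  have hmvt : ∀ t ∈ Icc (0:ℝ) 1, ‖Φ t y - Φ t x - Φ' t x (y - x)‖ ≤ ε * ‖y - x‖ := fun t ht =>
    (hs.inter (convex_ball x δ)).norm_image_sub_le_of_norm_hasFDerivWithin_le'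
      (fun z hz => (hΦ t ht z hz.1).mono inter_subset_left)
      (fun z hz => by rw [← dist_eq_norm, dist_comm]; exact (hball ⟨hz.2, hz.1⟩ t ht).le)
      ⟨hx, mem_ball_self hδ⟩ ⟨hys, hy⟩
  rw [ContinuousLinearMap.intervalIntegral_apply hint', ← intervalIntegral.integral_sub
    (hint y hys) (hint x hx), ← intervalIntegral.integral_sub ((hint y hys).sub (hint x hx))
    ⟨hint'.1.apply_continuousLinearMap _, hint'.2.apply_continuousLinearMap _⟩]
  exact norm_intervalIntegral_unit_le hmvt

variable [CompleteSpace G]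

theorem intervalIntegral_curryLeft {m : ℕ} {a b : ℝ}
    (M : ℝ → ContinuousMultilinearMap ℝ (fun _ : Fin (m + 1) => E) G) :
    (∫ t in a..b, M t).curryLeft = ∫ t in a..b, (M t).curryLeft := by
  have := LinearIsometry.intervalIntegral_comp_comm (𝕜 := ℝ) (μ := MeasureTheory.volume)
    (a := a) (b := b) (E := ContinuousMultilinearMap ℝ (fun _ : Fin (m + 1) => E) G)
    (F := E →L[ℝ] ContinuousMultilinearMap ℝ (fun _ : Fin m => E) G) (f := M)
  exact (this (continuousMultilinearCurryLeftEquiv ℝ _ G).toLinearIsometry).symm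

theorem hasFTaylorSeriesUpToOn_intervalIntegral {n : ℕ} {s : Set E} (hs : IsCompact s)
    (hconv : Convex ℝ s) {f : ℝ → E → G} {p : ℝ → E → FormalMultilinearSeries ℝ E G}
    (hp : ∀ t ∈ Icc (0:ℝ) 1, HasFTaylorSeriesUpToOn n (f t) (p t) s)
    (hcont : ∀ m ≤ n, ContinuousOn (fun q : E × ℝ => p q.2 q.1 m) (s ×ˢ Icc 0 1)) :
    HasFTaylorSeriesUpToOn n (fun x => ∫ t in (0:ℝ)..1, f t x)
      (fun x m => ∫ t in (0:ℝ)..1, p t x m) s := by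
  refine ⟨fun x hx => ?_, fun m hm x hx => ?_, fun m hm => ?_⟩
  · refine ((continuousMultilinearCurryFin0 ℝ E G).toLinearIsometry.intervalIntegral_comp_comm
      (fun t => p t x 0)).symm.trans (intervalIntegral.integral_congr fun t ht => ?_)
    rw [uIcc_of_le zero_le_one] at ht
    exact (hp t ht).zero_eq x hx
  · have hm' : m + 1 ≤ n := by exact_mod_cast hm
    rw [intervalIntegral_curryLeft]
    refine hasFDerivWithinAt_intervalIntegral_of_tendstoUniformlyOn hconv hx
      (fun t ht y hy => (hp t ht).fderivWithin m hm y hy) ?_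
      (fun y hy => (continuousOn_slice (hcont m (Nat.le_of_succ_le hm')) hy)
        |>.intervalIntegrable_of_Icc zero_le_one)
      (((continuousMultilinearCurryLeftEquiv ℝ _ G).continuous.comp_continuousOn
        (continuousOn_slice (hcont (m + 1) hm') hx)).intervalIntegrable_of_Icc zero_le_one)
    have huc := (hs.prod isCompact_Icc).uniformContinuousOn_of_continuous (hcont (m + 1) hm')
    exact (continuousMultilinearCurryLeftEquiv ℝ _ G).isometry.uniformContinuous
      |>.comp_tendstoUniformlyOn (huc.tendstoUniformlyOn (F := fun y t => p t y (m + 1)) hx)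
  · exact continuousOn_intervalIntegral_of_continuousOn_prod (hcont m (by exact_mod_cast hm))

end ParametricIntegral

section Average

variable {E G : Type*} [NormedAddCommGroup E] [NormedSpace ℝ E]
  [NormedAddCommGroup G] [NormedSpace ℝ G] {n : ℕ} {s : Set E} {f : E → G}
  {A : ℝ → E →L[ℝ] E}

theorem continuous_compContinuousLinearMap_diag {m : ℕ} :
    Continuous fun q : ContinuousMultilinearMap ℝ (fun _ : Fin m => E) G × (E →L[ℝ] E) =>
      q.1.compContinuousLinearMap fun _ => q.2 :=
  ((ContinuousMultilinearMap.compContinuousLinearMapContinuousMultilinear ℝ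
    (fun _ : Fin m => E) (fun _ => E) G).cont.comp
      (continuous_pi fun _ => continuous_snd)).clm_apply continuous_fst

theorem norm_compContinuousLinearMap_diag_le {m : ℕ}
    (M : ContinuousMultilinearMap ℝ (fun _ : Fin m => E) G) {L : E →L[ℝ] E} (hL : ‖L‖ ≤ 1) :
    ‖M.compContinuousLinearMap fun _ => L‖ ≤ ‖M‖ :=
  (M.norm_compContinuousLinearMap_le _).trans <| mul_le_of_le_one_right (norm_nonneg M) <|
    Finset.prod_le_one (fun _ _ => norm_nonneg L) fun _ _ => hL

theorem ContDiffOn.continuousOn_iteratedFDerivWithin_comp_family (hf : ContDiffOn ℝ n f s)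
    (hs : UniqueDiffOn ℝ s) {m : ℕ} (hm : m ≤ n) (hA : Continuous A)
    (hAs : ∀ t ∈ Icc (0:ℝ) 1, MapsTo (A t) s s) :
    ContinuousOn (fun q : E × ℝ =>
        (iteratedFDerivWithin ℝ m f s (A q.2 q.1)).compContinuousLinearMap fun _ => A q.2)
      (s ×ˢ Icc 0 1) := by
  have hD : ContinuousOn (fun q : E × ℝ => iteratedFDerivWithin ℝ m f s (A q.2 q.1))
      (s ×ˢ Icc 0 1) :=
    (hf.continuousOn_iteratedFDerivWithin (by exact_mod_cast hm) hs).comp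
      (by fun_prop) fun q hq => hAs q.2 hq.2 hq.1
  exact continuous_compContinuousLinearMap_diag.comp_continuousOn
    (hD.prodMk (hA.comp continuous_snd).continuousOn)

variable [CompleteSpace G]

theorem ContDiffOn.hasFTaylorSeriesUpToOn_intervalIntegral_comp (hf : ContDiffOn ℝ n f s)
    (hs : IsCompact s) (hconv : Convex ℝ s) (hsu : UniqueDiffOn ℝ s) (hA : Continuous A)
    (hAs : ∀ t ∈ Icc (0:ℝ) 1, MapsTo (A t) s s) :
    HasFTaylorSeriesUpToOn n (fun x => ∫ t in (0:ℝ)..1, f (A t x))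
      (fun x m => ∫ t in (0:ℝ)..1,
        (iteratedFDerivWithin ℝ m f s (A t x)).compContinuousLinearMap fun _ => A t) s :=
  hasFTaylorSeriesUpToOn_intervalIntegral hs hconv
    (fun t ht => ((hf.ftaylorSeriesWithin hsu).compContinuousLinearMap (A t)).mono
      fun _ hx => hAs t ht hx)
    fun _ hm => hf.continuousOn_iteratedFDerivWithin_comp_family hsu hm hA hAs

theorem ContDiffOn.norm_iteratedFDerivWithin_intervalIntegral_comp_sub_le
    (hf : ContDiffOn ℝ n f s) (hs : IsCompact s) (hconv : Convex ℝ s) (hsu : UniqueDiffOn ℝ s)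
    (hA : Continuous A) (hAs : ∀ t ∈ Icc (0:ℝ) 1, MapsTo (A t) s s)
    (hA1 : ∀ t ∈ Icc (0:ℝ) 1, ‖A t‖ ≤ 1) {m : ℕ} (hm : m ≤ n) {x y : E} (hx : x ∈ s)
    (hy : y ∈ s) {C : ℝ} (hC : ∀ t ∈ Icc (0:ℝ) 1,
      ‖iteratedFDerivWithin ℝ m f s (A t x) - iteratedFDerivWithin ℝ m f s (A t y)‖ ≤ C) :
    ‖iteratedFDerivWithin ℝ m (fun x => ∫ t in (0:ℝ)..1, f (A t x)) s x -
      iteratedFDerivWithin ℝ m (fun x => ∫ t in (0:ℝ)..1, f (A t x)) s y‖ ≤ C := by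
  have hT := hf.hasFTaylorSeriesUpToOn_intervalIntegral_comp hs hconv hsu hA hAs
  have hcont := hf.continuousOn_iteratedFDerivWithin_comp_family hsu hm hA hAs
  have hm' : (m : WithTop ℕ∞) ≤ n := by exact_mod_cast hm
  rw [← hT.eq_iteratedFDerivWithin_of_uniqueDiffOn hm' hsu hx,
    ← hT.eq_iteratedFDerivWithin_of_uniqueDiffOn hm' hsu hy, ← intervalIntegral.integral_sub]
  · refine norm_intervalIntegral_unit_le fun t ht => ?_
    calc _ = ‖(iteratedFDerivWithin ℝ m f s (A t x) - iteratedFDerivWithin ℝ m f s (A t y))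
          |>.compContinuousLinearMap fun _ => A t‖ := rfl
      _ ≤ C := (norm_compContinuousLinearMap_diag_le _ (hA1 t ht)).trans (hC t ht)
  exacts [(continuousOn_slice hcont hx).intervalIntegrable_of_Icc zero_le_one,
    (continuousOn_slice hcont hy).intervalIntegrable_of_Icc zero_le_one]

end Average

section DirectionalDerivative

variable {E G : Type*} [NormedAddCommGroup E] [NormedSpace ℝ E]
  [NormedAddCommGroup G] [NormedSpace ℝ G] {s : Set E} {f : E → G} {i : ℕ}

theorem ContinuousLinearMap.opNorm_apply_le (v : E) : ‖ContinuousLinearMap.apply ℝ G v‖ ≤ ‖v‖ :=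
  ContinuousLinearMap.opNorm_le_bound _ (norm_nonneg v) fun L => by
    simpa [mul_comm] using L.le_opNorm v

theorem ContDiffOn.norm_iteratedFDerivWithin_fderivWithin_apply_le
    (hf : ContDiffOn ℝ (i + 1) f s) (hs : UniqueDiffOn ℝ s) {x : E} (hx : x ∈ s) (v : E) :
    ‖iteratedFDerivWithin ℝ i (fun z => fderivWithin ℝ f s z v) s x‖ ≤
      ‖v‖ * ‖iteratedFDerivWithin ℝ (i + 1) f s x‖ := by
  have hg : ContDiffOn ℝ i (fderivWithin ℝ f s) s := hf.fderivWithin hs le_rfl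
  set L := ContinuousLinearMap.apply ℝ G v
  calc _ ≤ ‖L‖ * ‖iteratedFDerivWithin ℝ i (fderivWithin ℝ f s) s x‖ :=
        L.norm_iteratedFDerivWithin_comp_left (hg x hx) hs hx le_rfl
    _ ≤ ‖v‖ * ‖iteratedFDerivWithin ℝ (i + 1) f s x‖ := by
        rw [norm_iteratedFDerivWithin_fderivWithin hs hx]
        gcongr
        exact ContinuousLinearMap.opNorm_apply_le v

theorem ContDiffOn.norm_iteratedFDerivWithin_fderivWithin_apply_sub_le
    (hf : ContDiffOn ℝ (i + 1) f s) (hs : UniqueDiffOn ℝ s) {x y : E} (hx : x ∈ s) (hy : y ∈ s)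
    (v : E) :
    ‖iteratedFDerivWithin ℝ i (fun z => fderivWithin ℝ f s z v) s x -
        iteratedFDerivWithin ℝ i (fun z => fderivWithin ℝ f s z v) s y‖ ≤
      ‖v‖ * ‖iteratedFDerivWithin ℝ (i + 1) f s x - iteratedFDerivWithin ℝ (i + 1) f s y‖ := by
  have hg : ContDiffOn ℝ i (fderivWithin ℝ f s) s := hf.fderivWithin hs le_rfl
  set L := ContinuousLinearMap.apply ℝ G v
  have hcomp : (fun z => fderivWithin ℝ f s z v) = L ∘ fderivWithin ℝ f s := rfl
  rw [hcomp, L.iteratedFDerivWithin_comp_left (hg x hx) hs hx le_rfl,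
    L.iteratedFDerivWithin_comp_left (hg y hy) hs hy le_rfl]
  calc _ = ‖L.compContinuousMultilinearMap (iteratedFDerivWithin ℝ i (fderivWithin ℝ f s) s x -
        iteratedFDerivWithin ℝ i (fderivWithin ℝ f s) s y)‖ := rfl
    _ ≤ ‖L‖ * ‖iteratedFDerivWithin ℝ i (fderivWithin ℝ f s) s x -
        iteratedFDerivWithin ℝ i (fderivWithin ℝ f s) s y‖ :=
        L.norm_compContinuousMultilinearMap_le _
    _ ≤ _ := by
        rw [iteratedFDerivWithin_succ_eq_comp_right hs hx,
          iteratedFDerivWithin_succ_eq_comp_right hs hy, Function.comp_apply, Function.comp_apply,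
          ← LinearIsometryEquiv.map_sub, LinearIsometryEquiv.norm_map]
        gcongr
        exact ContinuousLinearMap.opNorm_apply_le v

end DirectionalDerivative

namespace ThinLemma

local notation "ℝ²" => EuclideanSpace ℝ (Fin 2)
local notation "e₀" => EuclideanSpace.single (0 : Fin 2) (1 : ℝ)

theorem mem_halfBall_inv_two_smul : (2⁻¹ : ℝ) • e₀ ∈ ball (0 : ℝ²) 1 ∩ {z | 0 < z 0} := by
  refine ⟨?_, show 0 < ((2⁻¹ : ℝ) • e₀) 0 by simp⟩
  simp [norm_smul]
  norm_num

theorem D_eq : D = closedBall 0 1 ∩ {z : ℝ² | 0 ≤ z 0} := by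
  refine Subset.antisymm (closure_minimal (inter_subset_inter ball_subset_closedBall
    fun z (hz : 0 < z 0) => hz.le) (isClosed_closedBall.inter
      (isClosed_le continuous_const (by fun_prop)))) ?_
  rintro x ⟨hx, hx0 : 0 ≤ x 0⟩
  have hseg : openSegment ℝ ((2⁻¹ : ℝ) • e₀) x ⊆ ball 0 1 ∩ {z | 0 < z 0} := by
    rintro _ ⟨a, b, ha, hb, hab, rfl⟩
    refine ⟨interior_subset <| (convex_ball 0 1).combo_interior_closure_mem_interior
      (by rw [isOpen_ball.interior_eq]; exact mem_halfBall_inv_two_smul.1)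
      (by rwa [closure_ball _ one_ne_zero]) ha hb.le hab, ?_⟩
    show 0 < (a • (2⁻¹ : ℝ) • e₀ + b • x) 0
    simp
    positivity
  exact closure_mono hseg (segment_subset_closure_openSegment (right_mem_segment ℝ _ x))

theorem mem_D {z : ℝ²} : z ∈ D ↔ ‖z‖ ≤ 1 ∧ 0 ≤ z 0 := by
  simp [D_eq]

theorem isCompact_D : IsCompact D := by
  rw [D_eq]
  exact (isCompact_closedBall _ _).inter_right (isClosed_le continuous_const (by fun_prop))

theorem convex_D : Convex ℝ D :=
  ((convex_ball _ _).inter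
    (convex_halfSpace_gt (EuclideanSpace.proj (0 : Fin 2)).isLinear 0)).closure

theorem uniqueDiffOn_D : UniqueDiffOn ℝ D := by
  refine uniqueDiffOn_convex convex_D ⟨(2⁻¹ : ℝ) • e₀, interior_mono subset_closure ?_⟩
  rw [(isOpen_ball.inter (isOpen_lt continuous_const (by fun_prop))).interior_eq]
  exact mem_halfBall_inv_two_smul

def squeeze (t : ℝ) : ℝ² →L[ℝ] ℝ² :=
  ContinuousLinearMap.id ℝ ℝ² - (1 - t) • (EuclideanSpace.proj 0).smulRight e₀

theorem squeeze_apply (t : ℝ) (z : ℝ²) : squeeze t z = z - ((1 - t) * z 0) • e₀ := by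
  simp [squeeze, smul_smul]

@[simp]
theorem squeeze_apply_zero (t : ℝ) (z : ℝ²) : squeeze t z 0 = t * z 0 := by
  simp [squeeze_apply]
  ring

@[simp]
theorem squeeze_apply_one (t : ℝ) (z : ℝ²) : squeeze t z 1 = z 1 := by
  simp [squeeze_apply]

theorem squeeze_one (z : ℝ²) : squeeze 1 z = z := by
  simp [squeeze_apply]

theorem squeeze_of_apply_zero_eq_zero (t : ℝ) {z : ℝ²} (hz : z 0 = 0) : squeeze t z = z := by
  simp [squeeze_apply, hz]

theorem continuous_squeeze : Continuous squeeze := by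
  unfold squeeze
  fun_prop

theorem hasDerivAt_squeeze (z : ℝ²) (t : ℝ) : HasDerivAt (fun s => squeeze s z) (z 0 • e₀) t := by
  simp only [squeeze_apply]
  simpa using ((((hasDerivAt_id t).const_sub 1).mul_const (z 0)).smul_const e₀).const_sub z

theorem norm_squeeze_le {t : ℝ} (ht : t ∈ Icc (0:ℝ) 1) : ‖squeeze t‖ ≤ 1 := by
  refine ContinuousLinearMap.opNorm_le_bound _ zero_le_one fun z => ?_
  rw [one_mul, ← sq_le_sq₀ (norm_nonneg _) (norm_nonneg _), EuclideanSpace.real_norm_sq_eq,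
    EuclideanSpace.real_norm_sq_eq, Fin.sum_univ_two, Fin.sum_univ_two, squeeze_apply_zero,
    squeeze_apply_one, mul_pow]
  have ht2 : t ^ 2 ≤ 1 := pow_le_one₀ ht.1 ht.2
  nlinarith [mul_le_mul_of_nonneg_right ht2 (sq_nonneg (z 0))]

theorem mapsTo_squeeze {t : ℝ} (ht : t ∈ Icc (0:ℝ) 1) : MapsTo (squeeze t) D D := fun z hz => by
  rw [mem_D] at hz ⊢
  exact ⟨((squeeze t).le_of_opNorm_le (norm_squeeze_le ht) z).trans (by linarith [hz.1]),
    by rw [squeeze_apply_zero]; exact mul_nonneg ht.1 hz.2⟩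

theorem divZeta_eq_intervalIntegral {H : ℝ² → ℝ} (hH : ContDiffOn ℝ 1 H D)
    (hvanish : ∀ z ∈ D, z 0 = 0 → H z = 0) {z : ℝ²} (hz : z ∈ D) :
    divZeta H z = ∫ t in (0:ℝ)..1, fderivWithin ℝ H D (squeeze t z) e₀ := by
  have hpath : MapsTo (fun t => squeeze t z) (Icc 0 1) D := fun t ht => mapsTo_squeeze ht hz
  rcases (mem_D.1 hz).2.eq_or_lt with h0 | h0
  · simp [divZeta, ← h0, squeeze_of_apply_zero_eq_zero _ h0.symm]
  have hderiv : ∀ t ∈ Ioo (0:ℝ) 1, HasDerivAt (fun s => H (squeeze s z))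
      (z 0 * fderivWithin ℝ H D (squeeze t z) e₀) t := fun t ht => by
    have hH' := (hH.differentiableOn one_ne_zero _
      (hpath (Ioo_subset_Icc_self ht))).hasFDerivWithinAt
    have h := (hH'.comp_hasDerivWithinAt t (hasDerivAt_squeeze z t).hasDerivWithinAt
      hpath).hasDerivAt (Icc_mem_nhds ht.1 ht.2)
    simp only [map_smul, smul_eq_mul] at h
    exact h
  have hint : ContinuousOn (fun t => z 0 * fderivWithin ℝ H D (squeeze t z) e₀) (Icc 0 1) :=
    continuousOn_const.mul <| ((hH.continuousOn_fderivWithin uniqueDiffOn_D le_rfl).clm_apply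
      continuousOn_const).comp (continuous_squeeze.clm_apply continuous_const).continuousOn hpath
  have hFTC := intervalIntegral.integral_eq_sub_of_hasDerivAt_of_le zero_le_one
    (hH.continuousOn.comp (continuous_squeeze.clm_apply continuous_const).continuousOn hpath)
    hderiv (hint.intervalIntegrable_of_Icc zero_le_one)
  rw [intervalIntegral.integral_const_mul, Function.comp_apply, Function.comp_apply, squeeze_one,
    hvanish _ (hpath ⟨le_rfl, zero_le_one⟩) (by simp), sub_zero] at hFTC
  rw [divZeta, if_neg h0.ne', ← hFTC]
  field_simp

theorem MemHolder.congr {K α : ℝ} {j : ℕ} {f g : ℝ² → ℝ} (hf : MemHolder K j α f)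
    (hfg : EqOn g f D) : MemHolder K j α g := by
  obtain ⟨hd, hb, hh⟩ := hf
  refine ⟨hd.congr hfg, fun i hi z hz => ?_, fun z hz w hw => ?_⟩
  · rw [iteratedFDerivWithin_congr hfg hz]
    exact hb i hi z hz
  · rw [iteratedFDerivWithin_congr hfg hz, iteratedFDerivWithin_congr hfg hw]
    exact hh z hz w hw

theorem MemHolder.fderivWithin_apply {K α : ℝ} {j : ℕ} {H : ℝ² → ℝ}
    (hH : MemHolder K (j + 1) α H) {v : ℝ²} (hv : ‖v‖ ≤ 1) :
    MemHolder K j α (fun z => fderivWithin ℝ H D z v) := by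
  obtain ⟨hd, hb, hh⟩ := hH
  have hd' : ContDiffOn ℝ (j + 1) H D := by exact_mod_cast hd
  refine ⟨(hd'.fderivWithin uniqueDiffOn_D le_rfl).clm_apply contDiffOn_const,
    fun i hi z hz => ?_, fun z hz w hw => ?_⟩
  · have hdi : ContDiffOn ℝ (i + 1) H D := hd'.of_le (by exact_mod_cast Nat.succ_le_succ hi)
    calc _ ≤ ‖v‖ * ‖iteratedFDerivWithin ℝ (i + 1) H D z‖ :=
          hdi.norm_iteratedFDerivWithin_fderivWithin_apply_le uniqueDiffOn_D hz v
      _ ≤ 1 * K := mul_le_mul hv (hb _ (by omega) z hz) (norm_nonneg _) zero_le_one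
      _ = K := one_mul K
  · calc _ ≤ ‖v‖ * ‖iteratedFDerivWithin ℝ (j + 1) H D z - iteratedFDerivWithin ℝ (j + 1) H D w‖ :=
          hd'.norm_iteratedFDerivWithin_fderivWithin_apply_sub_le uniqueDiffOn_D hz hw v
      _ ≤ 1 * (K * ‖z - w‖ ^ α) := mul_le_mul hv (hh z hz w hw) (norm_nonneg _) zero_le_one
      _ = K * ‖z - w‖ ^ α := one_mul _

theorem MemHolder.intervalIntegral_comp {K α : ℝ} {j : ℕ} {g : ℝ² → ℝ}
    (hg : MemHolder K j α g) (hα : 0 ≤ α) {A : ℝ → ℝ² →L[ℝ] ℝ²} (hA : Continuous A)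
    (hAD : ∀ t ∈ Icc (0:ℝ) 1, MapsTo (A t) D D) (hA1 : ∀ t ∈ Icc (0:ℝ) 1, ‖A t‖ ≤ 1) :
    MemHolder K j α (fun z => ∫ t in (0:ℝ)..1, g (A t z)) := by
  obtain ⟨hd, hb, hh⟩ := hg
  have hK : 0 ≤ K := (norm_nonneg _).trans (hb 0 (Nat.zero_le j) 0 (mem_D.2 ⟨by simp, le_rfl⟩))
  have hT := hd.hasFTaylorSeriesUpToOn_intervalIntegral_comp isCompact_D convex_D uniqueDiffOn_D
    hA hAD
  refine ⟨hT.contDiffOn, fun i hi z hz => ?_, fun z hz w hw => ?_⟩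
  · rw [← hT.eq_iteratedFDerivWithin_of_uniqueDiffOn (by exact_mod_cast hi) uniqueDiffOn_D hz]
    exact norm_intervalIntegral_unit_le fun t ht =>
      (norm_compContinuousLinearMap_diag_le _ (hA1 t ht)).trans (hb i hi _ (hAD t ht hz))
  refine hd.norm_iteratedFDerivWithin_intervalIntegral_comp_sub_le isCompact_D convex_D
    uniqueDiffOn_D hA hAD hA1 le_rfl hz hw fun t ht => ?_
  calc _ ≤ K * ‖A t z - A t w‖ ^ α := hh _ (hAD t ht hz) _ (hAD t ht hw)
    _ ≤ K * ‖z - w‖ ^ α := by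
        rw [← map_sub]
        gcongr
        simpa using (A t).le_of_opNorm_le (hA1 t ht) (z - w)

theorem div_by_zeta_holder_general (kk : ℕ) (hkk : 1 ≤ kk) (α : ℝ) (hα : α ∈ Ioc (0:ℝ) 1)
    (H : EuclideanSpace ℝ (Fin 2) → ℝ) (K : ℝ)
    (hvanish : ∀ z ∈ D, z 0 = 0 → H z = 0)
    (hH : MemHolder K kk α H) :
    MemHolder K (kk - 1) α (divZeta H) := by
  obtain ⟨j, rfl⟩ := Nat.exists_eq_add_of_le' hkk
  have hC1 : ContDiffOn ℝ 1 H D := hH.1.of_le (by exact_mod_cast hkk)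
  rw [Nat.add_sub_cancel]
  exact ((hH.fderivWithin_apply (v := e₀) (by simp)).intervalIntegral_comp hα.1.le
    continuous_squeeze (fun _ => mapsTo_squeeze) (fun _ => norm_squeeze_le)).congr
      fun z hz => divZeta_eq_intervalIntegral hC1 hvanish hz

/-- **Lemma 6.2.** If `H̃ ∈ C^{k,α}` on the closed half-disk vanishes on `{ζ = 0}`,
then `ζ⁻¹H̃ ∈ C^{k-1,α}` and `‖ζ⁻¹H̃‖_{C^{k-1,α}} ≤ ‖H̃‖_{C^{k,α}}`. -/
theorem div_by_zeta_holder (kk : ℕ) (hkk : 1 ≤ kk) (α : ℝ) (hα : α ∈ Ioc (0:ℝ) 1)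
    (H : EuclideanSpace ℝ (Fin 2) → ℝ) (K : ℝ)
    (hcont : ContinuousOn H D)
    (hvanish : ∀ z ∈ D, z 0 = 0 → H z = 0)
    (hH : MemHolder K kk α H) :
    MemHolder K (kk - 1) α (divZeta H) :=
  div_by_zeta_holder_general kk hkk α hα H K hvanish hH

end ThinLemma
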